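/- arXiv:2111.05680 — 4 statements merged into one kernel-verified Lean document; each statement's English description precedes it below -/
import Mathlib

section
/- Let (x*,y*) ∈ ℝⁿ×ℝᵐ be a point around which f, h, g are twice continuously differentiable, and let (μ*,λ*) be such that the Jacobian uniqueness conditions of (P_{x*}) are satisfied at (y*,μ*,λ*). Let (y(·),μ(·),λ(·)) be the implicit mapping from the implicit-function lemma, with (y(x*),μ(x*),λ(x*)) = (y*,μ*,λ*). Then the matrix K_α(x*) is nonsingular, and there exists δ₀>0 such that K_α(x) is nonsingular for every x ∈ B_{δ₀}(x*). -/
/-!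
If `K_α (d, w) = 0`, the second block row says `J_y h d = 0` and `J_y g_α d = 0`, and pairing
the first block row with `d` gives `⟨∇²_{yy}L d, d⟩ = 0`. The critical cone restricts such a `d`
only through the sign of `∇_y f ⬝ d`, so `d` or `-d` lies in it, and the second-order condition
forces `d = 0`; the first block row then reads `(J_y h; −J_y g_α)ᵀ w = 0`, and LICQ forces
`w = 0`. For `x` near `x*` the Jacobian uniqueness conditions of `(P_x)` hold with the same
active set `α`, so the same argument applies to `K_α(x)`.
-/

open Matrix
open scoped Classical

noncomputable section

/-- Vectors in `ℝ^n`. -/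
abbrev Vec (n : ℕ) : Type := Fin n → ℝ

/-- Gradient of a scalar function on `ℝ^n`. -/
def grad {n : ℕ} (φ : Vec n → ℝ) (x : Vec n) : Vec n :=
  fun i => fderiv ℝ φ x (Pi.single i 1)

/-- Hessian matrix of a scalar function on `ℝ^n`. -/
def hess {n : ℕ} (φ : Vec n → ℝ) (x : Vec n) : Matrix (Fin n) (Fin n) ℝ :=
  fun i j => fderiv ℝ (fun z => fderiv ℝ φ z (Pi.single j 1)) x (Pi.single i 1)

/-- Jacobian matrix of a map `ℝ^n → ℝ^k` (rows indexed by components). -/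
def jac {n k : ℕ} (F : Vec n → Vec k) (x : Vec n) : Matrix (Fin k) (Fin n) ℝ :=
  fun j i => fderiv ℝ (fun z => F z j) x (Pi.single i 1)

/-- Lagrangian `L(x,y,μ,λ) = f(x,y) + μᵀh(x,y) − λᵀg(x,y)` of the inner problem `(P_x)`. -/
def Lag {n m m₁ m₂ : ℕ} (f : Vec n → Vec m → ℝ) (h : Vec n → Vec m → Vec m₁)
    (g : Vec n → Vec m → Vec m₂) (x : Vec n) (y : Vec m) (μ : Vec m₁) (lam : Vec m₂) : ℝ :=
  f x y + ∑ j, μ j * h x y j - ∑ i, lam i * g x y i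

/-- `∇_y L(x,y,μ,λ)`. -/
def gradY {n m m₁ m₂ : ℕ} (f : Vec n → Vec m → ℝ) (h : Vec n → Vec m → Vec m₁)
    (g : Vec n → Vec m → Vec m₂) (x : Vec n) (y : Vec m) (μ : Vec m₁) (lam : Vec m₂) : Vec m :=
  grad (fun z => Lag f h g x z μ lam) y

/-- `∇_x L(x,y,μ,λ)`. -/
def gradX {n m m₁ m₂ : ℕ} (f : Vec n → Vec m → ℝ) (h : Vec n → Vec m → Vec m₁)
    (g : Vec n → Vec m → Vec m₂) (x : Vec n) (y : Vec m) (μ : Vec m₁) (lam : Vec m₂) : Vec n :=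
  grad (fun x' => Lag f h g x' y μ lam) x

/-- `∇²_{yy} L(x,y,μ,λ)`. -/
def hessYY {n m m₁ m₂ : ℕ} (f : Vec n → Vec m → ℝ) (h : Vec n → Vec m → Vec m₁)
    (g : Vec n → Vec m → Vec m₂) (x : Vec n) (y : Vec m) (μ : Vec m₁) (lam : Vec m₂) :
    Matrix (Fin m) (Fin m) ℝ :=
  hess (fun z => Lag f h g x z μ lam) y

/-- `∇²_{xx} L(x,y,μ,λ)`. -/
def hessXX {n m m₁ m₂ : ℕ} (f : Vec n → Vec m → ℝ) (h : Vec n → Vec m → Vec m₁)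
    (g : Vec n → Vec m → Vec m₂) (x : Vec n) (y : Vec m) (μ : Vec m₁) (lam : Vec m₂) :
    Matrix (Fin n) (Fin n) ℝ :=
  hess (fun x' => Lag f h g x' y μ lam) x

/-- Mixed second derivative `∇²_{yx} L(x,y,μ,λ)` (an `m × n` matrix, entry `(j,i)` is
`∂²L/∂x_i∂y_j`). -/
def hessYX {n m m₁ m₂ : ℕ} (f : Vec n → Vec m → ℝ) (h : Vec n → Vec m → Vec m₁)
    (g : Vec n → Vec m → Vec m₂) (x : Vec n) (y : Vec m) (μ : Vec m₁) (lam : Vec m₂) :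
    Matrix (Fin m) (Fin n) ℝ :=
  fun j i => fderiv ℝ (fun x' => fderiv ℝ (fun z => Lag f h g x' z μ lam) y (Pi.single j 1))
    x (Pi.single i 1)

/-- Feasible set `Φ = {x : H(x)=0, G(x)≤0}` of the outer problem. -/
def PhiSet {n n₁ n₂ : ℕ} (H : Vec n → Vec n₁) (G : Vec n → Vec n₂) : Set (Vec n) :=
  {x | H x = 0 ∧ ∀ i, G x i ≤ 0}

/-- Feasible set `Y(x) = {y : h(x,y)=0, g(x,y)≤0}` of the inner problem. -/
def Yset {n m m₁ m₂ : ℕ} (h : Vec n → Vec m → Vec m₁) (g : Vec n → Vec m → Vec m₂)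
    (x : Vec n) : Set (Vec m) :=
  {y | h x y = 0 ∧ ∀ i, g x y i ≤ 0}

/-- KKT conditions of the inner problem `(P_x)` at `(y,μ,λ)`. -/
def InnerKKT {n m m₁ m₂ : ℕ} (f : Vec n → Vec m → ℝ) (h : Vec n → Vec m → Vec m₁)
    (g : Vec n → Vec m → Vec m₂) (x : Vec n) (y : Vec m) (μ : Vec m₁) (lam : Vec m₂) : Prop :=
  gradY f h g x y μ lam = 0 ∧ h x y = 0 ∧
    (∀ i, 0 ≤ lam i) ∧ (∀ i, g x y i ≤ 0) ∧ (∀ i, lam i * g x y i = 0)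

/-- Linear independence constraint qualification for the inner problem at `(x,y)`:
the gradients of the equality constraints together with those of the active inequality
constraints are linearly independent. -/
def InnerLICQ {n m m₁ m₂ : ℕ} (h : Vec n → Vec m → Vec m₁) (g : Vec n → Vec m → Vec m₂)
    (x : Vec n) (y : Vec m) : Prop :=
  LinearIndependent ℝ (Sum.elim (fun j : Fin m₁ => grad (fun z => h x z j) y)
    (fun i : {i : Fin m₂ // g x y i = 0} => grad (fun z => g x z i.1) y))

/-- Critical cone `C_x(y)` of the inner problem `(P_x)`. -/
def innerCone {n m m₁ m₂ : ℕ} (f : Vec n → Vec m → ℝ) (h : Vec n → Vec m → Vec m₁)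
    (g : Vec n → Vec m → Vec m₂) (x : Vec n) (y : Vec m) : Set (Vec m) :=
  {d | jac (h x) y *ᵥ d = 0 ∧
    (∀ i, g x y i = 0 → grad (fun z => g x z i) y ⬝ᵥ d ≤ 0) ∧
    grad (f x) y ⬝ᵥ d ≤ 0}

/-- Jacobian uniqueness conditions of the inner problem `(P_x)` at `(y,μ,λ)`:
KKT conditions, LICQ, strict complementarity, and the second-order sufficient
optimality condition. -/
def InnerJU {n m m₁ m₂ : ℕ} (f : Vec n → Vec m → ℝ) (h : Vec n → Vec m → Vec m₁)
    (g : Vec n → Vec m → Vec m₂) (x : Vec n) (y : Vec m) (μ : Vec m₁) (lam : Vec m₂) : Prop :=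
  InnerKKT f h g x y μ lam ∧ InnerLICQ h g x y ∧
    (∀ i, 0 < lam i - g x y i) ∧
    (∀ d ∈ innerCone f h g x y, d ≠ 0 → d ⬝ᵥ hessYY f h g x y μ lam *ᵥ d < 0)

/-- The active index set `α = {i : g_i(x,y) = 0}` of the inner problem. -/
def activeSet {n m m₂ : ℕ} (g : Vec n → Vec m → Vec m₂) (x : Vec n) (y : Vec m) :
    Finset (Fin m₂) :=
  Finset.univ.filter fun i => g x y i = 0

/-- The inner KKT matrix `K_α` with block rows
`[∇²_{yy}L, J_y hᵀ, −J_y g_αᵀ]`, `[J_y h, 0, 0]`, `[−J_y g_α, 0, 0]`. -/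
def Kmat {n m m₁ m₂ : ℕ} (f : Vec n → Vec m → ℝ) (h : Vec n → Vec m → Vec m₁)
    (g : Vec n → Vec m → Vec m₂) (α : Finset (Fin m₂)) (x : Vec n) (y : Vec m)
    (μ : Vec m₁) (lam : Vec m₂) :
    Matrix (Fin m ⊕ (Fin m₁ ⊕ ↥α)) (Fin m ⊕ (Fin m₁ ⊕ ↥α)) ℝ :=
  Matrix.fromBlocks (hessYY f h g x y μ lam)
    (Matrix.fromRows (jac (h x) y)
      (-((jac (g x) y).submatrix (fun a : ↥α => (a : Fin m₂)) id)))ᵀ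
    (Matrix.fromRows (jac (h x) y)
      (-((jac (g x) y).submatrix (fun a : ↥α => (a : Fin m₂)) id)))
    0

/-- The matrix `N_α` with block rows `∇²_{yx}L`, `J_x h`, `J_x g_α`. -/
def Nmat {n m m₁ m₂ : ℕ} (f : Vec n → Vec m → ℝ) (h : Vec n → Vec m → Vec m₁)
    (g : Vec n → Vec m → Vec m₂) (α : Finset (Fin m₂)) (x : Vec n) (y : Vec m)
    (μ : Vec m₁) (lam : Vec m₂) :
    Matrix (Fin m ⊕ (Fin m₁ ⊕ ↥α)) (Fin n) ℝ :=
  Matrix.fromRows (hessYX f h g x y μ lam)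
    (Matrix.fromRows (jac (fun x' => h x' y) x)
      ((jac (fun x' => g x' y) x).submatrix (fun a : ↥α => (a : Fin m₂)) id))

/-- The reduced Hessian `Ψ = ∇²_{xx}L − N_αᵀ K_α⁻¹ N_α` (active set taken at `(x,y)`). -/
def Psi {n m m₁ m₂ : ℕ} (f : Vec n → Vec m → ℝ) (h : Vec n → Vec m → Vec m₁)
    (g : Vec n → Vec m → Vec m₂) (x : Vec n) (y : Vec m) (μ : Vec m₁) (lam : Vec m₂) :
    Matrix (Fin n) (Fin n) ℝ :=
  hessXX f h g x y μ lam -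
    (Nmat f h g (activeSet g x y) x y μ lam)ᵀ * (Kmat f h g (activeSet g x y) x y μ lam)⁻¹ *
      Nmat f h g (activeSet g x y) x y μ lam

/-- The multiplier set `Λ(x)` of the outer problem: pairs `(u,v)` with
`∇_x L + JH(x)ᵀu + JG(x)ᵀv = 0`, `H(x)=0`, `0 ≤ v ⊥ G(x) ≤ 0`. -/
def LambdaSet {n m n₁ n₂ m₁ m₂ : ℕ} (f : Vec n → Vec m → ℝ) (h : Vec n → Vec m → Vec m₁)
    (g : Vec n → Vec m → Vec m₂) (H : Vec n → Vec n₁) (G : Vec n → Vec n₂)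
    (x : Vec n) (y : Vec m) (μ : Vec m₁) (lam : Vec m₂) : Set (Vec n₁ × Vec n₂) :=
  {uv | gradX f h g x y μ lam + (jac H x)ᵀ *ᵥ uv.1 + (jac G x)ᵀ *ᵥ uv.2 = 0 ∧
    H x = 0 ∧ (∀ i, 0 ≤ uv.2 i) ∧ (∀ i, G x i ≤ 0) ∧ (∀ i, uv.2 i * G x i = 0)}

/-- Linear independence constraint qualification for the outer problem at `x`. -/
def OuterLICQ {n n₁ n₂ : ℕ} (H : Vec n → Vec n₁) (G : Vec n → Vec n₂) (x : Vec n) : Prop :=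
  LinearIndependent ℝ (Sum.elim (fun j : Fin n₁ => grad (fun x' => H x' j) x)
    (fun i : {i : Fin n₂ // G x i = 0} => grad (fun x' => G x' i.1) x))

/-- The outer critical cone `C(x)`. -/
def upperCone {n m n₁ n₂ m₁ m₂ : ℕ} (f : Vec n → Vec m → ℝ) (h : Vec n → Vec m → Vec m₁)
    (g : Vec n → Vec m → Vec m₂) (H : Vec n → Vec n₁) (G : Vec n → Vec n₂)
    (x : Vec n) (y : Vec m) (μ : Vec m₁) (lam : Vec m₂) : Set (Vec n) :=
  {d | jac H x *ᵥ d = 0 ∧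
    (∀ i, G x i = 0 → grad (fun x' => G x' i) x ⬝ᵥ d ≤ 0) ∧
    gradX f h g x y μ lam ⬝ᵥ d ≤ 0}

/-- Quadratic form `⟨[Σ_j u_j ∇²H_j(x) + Σ_i v_i ∇²G_i(x)]d, d⟩`. -/
def upperQuad {n n₁ n₂ : ℕ} (H : Vec n → Vec n₁) (G : Vec n → Vec n₂) (x : Vec n)
    (uv : Vec n₁ × Vec n₂) (d : Vec n) : ℝ :=
  d ⬝ᵥ ((∑ j, uv.1 j • hess (fun x' => H x' j) x
    + ∑ i, uv.2 i • hess (fun x' => G x' i) x) *ᵥ d)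

/-- Second-order sufficient condition term at a direction `d`:
`sup_{(u,v)∈Λ(x)} ⟨[Σ u_j∇²H_j + Σ v_i∇²G_i]d,d⟩ + ⟨[∇²_{xx}L − N_αᵀK_α⁻¹N_α]d,d⟩`. -/
def secondOrderTerm {n m n₁ n₂ m₁ m₂ : ℕ} (f : Vec n → Vec m → ℝ)
    (h : Vec n → Vec m → Vec m₁) (g : Vec n → Vec m → Vec m₂)
    (H : Vec n → Vec n₁) (G : Vec n → Vec n₂)
    (x : Vec n) (y : Vec m) (μ : Vec m₁) (lam : Vec m₂) (d : Vec n) : ℝ :=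
  sSup ((fun uv => upperQuad H G x uv d) '' LambdaSet f h g H G x y μ lam) +
    d ⬝ᵥ Psi f h g x y μ lam *ᵥ d

/-- Jacobian uniqueness condition of the constrained minimax problem (Definition 3.1):
(i) outer KKT conditions, (ii) outer LICQ, (iii) outer strict complementarity,
(iv) inner Jacobian uniqueness conditions, (v) second-order sufficient condition on the
critical cone `C(x)`. -/
def MinimaxJU {n m n₁ n₂ m₁ m₂ : ℕ} (f : Vec n → Vec m → ℝ) (h : Vec n → Vec m → Vec m₁)
    (g : Vec n → Vec m → Vec m₂) (H : Vec n → Vec n₁) (G : Vec n → Vec n₂)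
    (x : Vec n) (u : Vec n₁) (v : Vec n₂) (y : Vec m) (μ : Vec m₁) (lam : Vec m₂) : Prop :=
  (u, v) ∈ LambdaSet f h g H G x y μ lam ∧
  OuterLICQ H G x ∧
  (∀ i, G x i = 0 → 0 < v i - G x i) ∧
  (y ∈ Yset h g x ∧ InnerJU f h g x y μ lam) ∧
  (∀ d ∈ upperCone f h g H G x y μ lam, d ≠ 0 →
    0 < secondOrderTerm f h g H G x y μ lam d)

/-- Property A of the constrained minimax problem (Definition 4.2): outer KKT, outer LICQ,
inner Jacobian uniqueness conditions, and the strong second-order sufficient condition on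
the affine hull of the critical cone (no outer strict complementarity required). -/
def PropertyA {n m n₁ n₂ m₁ m₂ : ℕ} (f : Vec n → Vec m → ℝ) (h : Vec n → Vec m → Vec m₁)
    (g : Vec n → Vec m → Vec m₂) (H : Vec n → Vec n₁) (G : Vec n → Vec n₂)
    (x : Vec n) (u : Vec n₁) (v : Vec n₂) (y : Vec m) (μ : Vec m₁) (lam : Vec m₂) : Prop :=
  (u, v) ∈ LambdaSet f h g H G x y μ lam ∧
  OuterLICQ H G x ∧
  (y ∈ Yset h g x ∧ InnerJU f h g x y μ lam) ∧
  (∀ d ∈ (affineSpan ℝ (upperCone f h g H G x y μ lam) : Set (Vec n)), d ≠ 0 →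
    0 < secondOrderTerm f h g H G x y μ lam d)

/-- `(x*,y*)` is a local minimax point (Definition 1.1). -/
def LocalMinimax {n m n₁ n₂ m₁ m₂ : ℕ} (f : Vec n → Vec m → ℝ) (h : Vec n → Vec m → Vec m₁)
    (g : Vec n → Vec m → Vec m₂) (H : Vec n → Vec n₁) (G : Vec n → Vec n₂)
    (xs : Vec n) (ys : Vec m) : Prop :=
  ∃ δ₀ > (0:ℝ), ∃ η : ℝ → ℝ, (∀ δ ∈ Set.Ioc 0 δ₀, 0 ≤ η δ) ∧
    Filter.Tendsto η (nhdsWithin 0 (Set.Ioi 0)) (nhds 0) ∧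
    ∀ δ ∈ Set.Ioc (0:ℝ) δ₀, ∀ x ∈ Metric.closedBall xs δ ∩ PhiSet H G,
      ∀ y ∈ Yset h g xs ∩ Metric.closedBall ys δ,
        f xs y ≤ f xs ys ∧
        f xs ys ≤ sSup (f x '' (Yset h g x ∩ Metric.closedBall ys (η δ)))

/-- Componentwise positive part. -/
def vecPos {p : ℕ} (w : Vec p) : Vec p := fun i => max 0 (w i)

/-- Componentwise negative part. -/
def vecNeg {p : ℕ} (w : Vec p) : Vec p := fun i => min 0 (w i)

/-- The space of the Kojima mapping variables `(x,u,w,y,μ,ξ)`. -/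
abbrev ZSpace (n n₁ n₂ m m₁ m₂ : ℕ) : Type :=
  Vec n × Vec n₁ × Vec n₂ × Vec m × Vec m₁ × Vec m₂

/-- The Kojima mapping of the constrained minimax problem. -/
def Kojima {n m n₁ n₂ m₁ m₂ : ℕ} (f : Vec n → Vec m → ℝ) (h : Vec n → Vec m → Vec m₁)
    (g : Vec n → Vec m → Vec m₂) (H : Vec n → Vec n₁) (G : Vec n → Vec n₂) :
    ZSpace n n₁ n₂ m m₁ m₂ → ZSpace n n₁ n₂ m m₁ m₂ :=
  fun z =>
    (gradX f h g z.1 z.2.2.2.1 z.2.2.2.2.1 (vecPos z.2.2.2.2.2)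
        + (jac H z.1)ᵀ *ᵥ z.2.1 + (jac G z.1)ᵀ *ᵥ vecPos z.2.2.1,
     H z.1,
     G z.1 - vecNeg z.2.2.1,
     gradY f h g z.1 z.2.2.2.1 z.2.2.2.2.1 (vecPos z.2.2.2.2.2),
     h z.1 z.2.2.2.1,
     -g z.1 z.2.2.2.1 + vecNeg z.2.2.2.2.2)

/-- Euclidean pairing on `ZSpace`. -/
def pairZ {n n₁ n₂ m m₁ m₂ : ℕ} (a b : ZSpace n n₁ n₂ m m₁ m₂) : ℝ :=
  a.1 ⬝ᵥ b.1 + a.2.1 ⬝ᵥ b.2.1 + a.2.2.1 ⬝ᵥ b.2.2.1 + a.2.2.2.1 ⬝ᵥ b.2.2.2.1 +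
    a.2.2.2.2.1 ⬝ᵥ b.2.2.2.2.1 + a.2.2.2.2.2 ⬝ᵥ b.2.2.2.2.2

/-- The cone `𝓚 = ℝⁿ×ℝ^{n₁}×ℝ₊^{n₂}×ℝᵐ×ℝ^{m₁}×ℝ₊^{m₂}`. -/
def Kcone {n n₁ n₂ m m₁ m₂ : ℕ} : Set (ZSpace n n₁ n₂ m m₁ m₂) :=
  {z | (∀ i, 0 ≤ z.2.2.1 i) ∧ ∀ i, 0 ≤ z.2.2.2.2.2 i}

/-- Normal cone of a convex set `K` at `z` (w.r.t. the Euclidean pairing);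
empty if `z ∉ K`. -/
def normalCone {n n₁ n₂ m m₁ m₂ : ℕ} (K : Set (ZSpace n n₁ n₂ m m₁ m₂))
    (z : ZSpace n n₁ n₂ m m₁ m₂) : Set (ZSpace n n₁ n₂ m m₁ m₂) :=
  {w | z ∈ K ∧ ∀ z' ∈ K, pairZ w (z' - z) ≤ 0}

/-- The map `𝓗(z)` of the generalized-equation formulation of the KKT system. -/
def Hmap {n m n₁ n₂ m₁ m₂ : ℕ} (f : Vec n → Vec m → ℝ) (h : Vec n → Vec m → Vec m₁)
    (g : Vec n → Vec m → Vec m₂) (H : Vec n → Vec n₁) (G : Vec n → Vec n₂) :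
    ZSpace n n₁ n₂ m m₁ m₂ → ZSpace n n₁ n₂ m m₁ m₂ :=
  fun z =>
    (gradX f h g z.1 z.2.2.2.1 z.2.2.2.2.1 z.2.2.2.2.2
        + (jac H z.1)ᵀ *ᵥ z.2.1 + (jac G z.1)ᵀ *ᵥ z.2.2.1,
     H z.1,
     -G z.1,
     gradY f h g z.1 z.2.2.2.1 z.2.2.2.2.1 z.2.2.2.2.2,
     h z.1 z.2.2.2.1,
     -g z.1 z.2.2.2.1)

/-- `z*` is a strongly regular solution of `0 ∈ Φ(z) + N_K(z)` (Definition 4.1 of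
Robinson): for all small `η`, the linearized generalized equation
`η ∈ Φ(z*) + JΦ(z*)(z−z*) + N_K(z)` has a unique solution `ẑ(η)` near `z*`, depending
Lipschitz-continuously on `η`. -/
def StrongRegular {n m n₁ n₂ m₁ m₂ : ℕ} (Φ : ZSpace n n₁ n₂ m m₁ m₂ → ZSpace n n₁ n₂ m m₁ m₂)
    (K : Set (ZSpace n n₁ n₂ m m₁ m₂)) (zs : ZSpace n n₁ n₂ m m₁ m₂) : Prop :=
  ∃ δ > (0:ℝ), ∃ ε > (0:ℝ), ∃ zhat : ZSpace n n₁ n₂ m m₁ m₂ → ZSpace n n₁ n₂ m m₁ m₂,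
    (∀ η ∈ Metric.closedBall (0 : ZSpace n n₁ n₂ m m₁ m₂) δ,
      zhat η ∈ Metric.closedBall zs ε ∧
      η - (Φ zs + fderiv ℝ Φ zs (zhat η - zs)) ∈ normalCone K (zhat η) ∧
      ∀ z ∈ Metric.closedBall zs ε,
        η - (Φ zs + fderiv ℝ Φ zs (z - zs)) ∈ normalCone K z → z = zhat η) ∧
    ∃ L : NNReal, LipschitzOnWith L zhat (Metric.closedBall 0 δ)

/-- `Φ` is a locally Lipschitz homeomorphism near `z`. -/
def LocLipHomeo {E : Type*} [NormedAddCommGroup E] (Φ : E → E) (z : E) : Prop :=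
  ∃ U ∈ nhds z, ∃ V ∈ nhds (Φ z), ∃ Ψ : E → E,
    Φ '' U = V ∧ Set.MapsTo Ψ V U ∧
    (∀ a ∈ U, Ψ (Φ a) = a) ∧ (∀ b ∈ V, Φ (Ψ b) = b) ∧
    (∃ L₁ : NNReal, LipschitzOnWith L₁ Φ U) ∧ ∃ L₂ : NNReal, LipschitzOnWith L₂ Ψ V

/-- B-subdifferential of a map between normed spaces. -/
def Bsubdiff {E F : Type*} [NormedAddCommGroup E] [NormedSpace ℝ E]
    [NormedAddCommGroup F] [NormedSpace ℝ F] (Φ : E → F) (z : E) : Set (E →L[ℝ] F) :=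
  {V | ∃ zk : ℕ → E, (∀ k, DifferentiableAt ℝ Φ (zk k)) ∧
    Filter.Tendsto zk Filter.atTop (nhds z) ∧
    Filter.Tendsto (fun k => fderiv ℝ Φ (zk k)) Filter.atTop (nhds V)}

/-- Clarke subdifferential: convex hull of the B-subdifferential. -/
def ClarkeSubdiff {E F : Type*} [NormedAddCommGroup E] [NormedSpace ℝ E]
    [NormedAddCommGroup F] [NormedSpace ℝ F] (Φ : E → F) (z : E) : Set (E →L[ℝ] F) :=
  convexHull ℝ (Bsubdiff Φ z)

theorem Matrix.isUnit_fromBlocks_transpose_zero {K ι κ : Type*} [Field K] [Fintype ι] [Fintype κ]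
    [DecidableEq ι] [DecidableEq κ] {A : Matrix ι ι K} {B : Matrix κ ι K}
    (hB : LinearIndependent K B.row) (hA : ∀ d, B *ᵥ d = 0 → d ⬝ᵥ A *ᵥ d = 0 → d = 0) :
    IsUnit (fromBlocks A Bᵀ B 0) := by
  rw [isUnit_iff_isUnit_det, isUnit_iff_ne_zero, Ne, ← exists_mulVec_eq_zero_iff]
  rintro ⟨v, hv, hKv⟩
  rw [fromBlocks_mulVec] at hKv
  have hTop : A *ᵥ (v ∘ Sum.inl) + Bᵀ *ᵥ (v ∘ Sum.inr) = 0 :=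
    funext fun i => congrFun hKv (Sum.inl i)
  have hBd : B *ᵥ (v ∘ Sum.inl) = 0 := by
    funext k
    simpa using congrFun hKv (Sum.inr k)
  have hd : v ∘ Sum.inl = 0 := by
    refine hA _ hBd ?_
    have := congrArg (v ∘ Sum.inl ⬝ᵥ ·) hTop
    simpa [dotProduct_add, dotProduct_mulVec _ Bᵀ, vecMul_transpose, hBd] using this
  have hw : v ∘ Sum.inr = 0 := by
    refine Matrix.vecMul_injective_iff.mpr hB ?_
    simpa [hd, mulVec_transpose] using hTop
  exact hv (funext fun k => by rcases k with i | k; exacts [congrFun hd i, congrFun hw k])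

section InnerProblem

variable {n m m₁ m₂ : ℕ} {f : Vec n → Vec m → ℝ} {h : Vec n → Vec m → Vec m₁}
  {g : Vec n → Vec m → Vec m₂} {x : Vec n} {y : Vec m} {μ : Vec m₁} {lam : Vec m₂}

/-- `Kmat f h g α x y μ lam` is by definition `fromBlocks (hessYY f h g x y μ lam) Bᵀ B 0`
with `B = constraintJac h g α x y`. -/
def constraintJac (h : Vec n → Vec m → Vec m₁) (g : Vec n → Vec m → Vec m₂)
    (α : Finset (Fin m₂)) (x : Vec n) (y : Vec m) : Matrix (Fin m₁ ⊕ ↥α) (Fin m) ℝ :=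
  fromRows (jac (h x) y) (-((jac (g x) y).submatrix (fun a : ↥α => (a : Fin m₂)) id))

theorem InnerLICQ.linearIndependent_row_constraintJac (hlicq : InnerLICQ h g x y) :
    LinearIndependent ℝ (constraintJac h g (activeSet g x y) x y).row := by
  let e : Fin m₁ ⊕ ↥(activeSet g x y) ≃ Fin m₁ ⊕ {i : Fin m₂ // g x y i = 0} :=
    Equiv.sumCongr (Equiv.refl _) (Equiv.subtypeEquivRight fun i => by simp [activeSet])
  convert (hlicq.comp e e.injective).units_smul (Sum.elim 1 (-1)) using 1
  funext k
  rcases k with j | a <;>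
    simp only [row, constraintJac, e, Pi.smul_apply', Function.comp_apply, Equiv.sumCongr_apply,
      Sum.map_inl, Sum.map_inr, Sum.elim_inl, Sum.elim_inr, Pi.one_apply, Pi.neg_apply,
      Units.neg_smul, one_smul] <;>
    rfl

theorem mem_innerCone_or_neg_mem {d : Vec m}
    (hd : constraintJac h g (activeSet g x y) x y *ᵥ d = 0) :
    d ∈ innerCone f h g x y ∨ -d ∈ innerCone f h g x y := by
  rw [constraintJac, fromRows_mulVec] at hd
  have hJh : jac (h x) y *ᵥ d = 0 := funext fun j => congrFun hd (Sum.inl j)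
  have hJg (i : Fin m₂) (hi : g x y i = 0) : grad (fun z => g x z i) y ⬝ᵥ d = 0 := by
    have hi' := congrFun hd (Sum.inr ⟨i, by simp [activeSet, hi]⟩)
    simp only [Sum.elim_inr, neg_mulVec, Pi.neg_apply, Pi.zero_apply, neg_eq_zero] at hi'
    exact hi'
  rcases le_total (grad (f x) y ⬝ᵥ d) 0 with hf | hf
  · exact .inl ⟨hJh, fun i hi => (hJg i hi).le, hf⟩
  · refine .inr ⟨by rw [mulVec_neg, hJh, neg_zero], fun i hi => ?_, ?_⟩
    · rw [dotProduct_neg, hJg i hi, neg_zero]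
    · rwa [dotProduct_neg, neg_nonpos]

theorem eq_zero_of_constraintJac_mulVec_eq_zero
    (hsosc : ∀ d ∈ innerCone f h g x y, d ≠ 0 → d ⬝ᵥ hessYY f h g x y μ lam *ᵥ d < 0)
    {d : Vec m} (hd : constraintJac h g (activeSet g x y) x y *ᵥ d = 0)
    (hq : d ⬝ᵥ hessYY f h g x y μ lam *ᵥ d = 0) : d = 0 := by
  by_contra hne
  rcases mem_innerCone_or_neg_mem (f := f) hd with hc | hc
  · exact (hsosc d hc hne).ne hq
  · have := hsosc (-d) hc (neg_ne_zero.mpr hne)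
    rw [mulVec_neg, dotProduct_neg, neg_dotProduct, neg_neg, hq] at this
    exact this.false

theorem InnerJU.isUnit_Kmat (hJU : InnerJU f h g x y μ lam) :
    IsUnit (Kmat f h g (activeSet g x y) x y μ lam) :=
  isUnit_fromBlocks_transpose_zero hJU.2.1.linearIndependent_row_constraintJac
    fun _ hd hq => eq_zero_of_constraintJac_mulVec_eq_zero hJU.2.2.2 hd hq

end InnerProblem

theorem stmt_1_general {n m m₁ m₂ : ℕ}
    (f : Vec n → Vec m → ℝ) (h : Vec n → Vec m → Vec m₁) (g : Vec n → Vec m → Vec m₂)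
    (xs : Vec n) (ys : Vec m) (μs : Vec m₁) (lams : Vec m₂)
    (hJU : InnerJU f h g xs ys μs lams)
    -- the implicit mapping from the implicit-function lemma
    (δ' : ℝ) (hδ' : 0 < δ')
    (Y : Vec n → Vec m) (M : Vec n → Vec m₁) (Lam : Vec n → Vec m₂)
    (hJUx : ∀ x ∈ Metric.closedBall xs δ', InnerJU f h g x (Y x) (M x) (Lam x))
    (hact : ∀ x ∈ Metric.closedBall xs δ', ∀ i,
      (g xs ys i = 0 → g x (Y x) i = 0 ∧ 0 < Lam x i) ∧
      (g xs ys i ≠ 0 → g x (Y x) i < 0 ∧ Lam x i = 0)) :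
    IsUnit (Kmat f h g (activeSet g xs ys) xs ys μs lams) ∧
      ∃ δ₀ > (0:ℝ), δ₀ ≤ δ' ∧ ∀ x ∈ Metric.closedBall xs δ₀,
        IsUnit (Kmat f h g (activeSet g xs ys) x (Y x) (M x) (Lam x)) := by
  refine ⟨hJU.isUnit_Kmat, δ', hδ', le_rfl, fun x hx => ?_⟩
  have hα : activeSet g x (Y x) = activeSet g xs ys := by
    ext i
    simp only [activeSet, Finset.mem_filter, Finset.mem_univ, true_and]
    exact ⟨fun hi => by_contra fun hne => ((hact x hx i).2 hne).1.ne hi,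
      fun hi => ((hact x hx i).1 hi).1⟩
  rw [← hα]
  exact (hJUx x hx).isUnit_Kmat

/-- Lemma 2.2. Under the Jacobian uniqueness conditions of `(P_{x*})`
at `(y*,μ*,λ*)` and with the implicit mapping `(y(·),μ(·),λ(·))` from the
implicit-function lemma, the matrix `K_α(x*)` is nonsingular, and `K_α(x)` is
nonsingular for all `x` in a small closed ball around `x*`. -/
theorem stmt_1 {n m m₁ m₂ : ℕ}
    (f : Vec n → Vec m → ℝ) (h : Vec n → Vec m → Vec m₁) (g : Vec n → Vec m → Vec m₂)
    (xs : Vec n) (ys : Vec m) (μs : Vec m₁) (lams : Vec m₂)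
    (hf : ContDiffAt ℝ 2 (fun p : Vec n × Vec m => f p.1 p.2) (xs, ys))
    (hh : ContDiffAt ℝ 2 (fun p : Vec n × Vec m => h p.1 p.2) (xs, ys))
    (hg : ContDiffAt ℝ 2 (fun p : Vec n × Vec m => g p.1 p.2) (xs, ys))
    (hJU : InnerJU f h g xs ys μs lams)
    -- the implicit mapping from the implicit-function lemma
    (δ' : ℝ) (hδ' : 0 < δ')
    (Y : Vec n → Vec m) (M : Vec n → Vec m₁) (Lam : Vec n → Vec m₂)
    (hYx : Y xs = ys) (hMx : M xs = μs) (hLx : Lam xs = lams)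
    (hYc : ContDiffOn ℝ 2 Y (Metric.closedBall xs δ'))
    (hMc : ContDiffOn ℝ 2 M (Metric.closedBall xs δ'))
    (hLc : ContDiffOn ℝ 2 Lam (Metric.closedBall xs δ'))
    (hJUx : ∀ x ∈ Metric.closedBall xs δ', InnerJU f h g x (Y x) (M x) (Lam x))
    (hact : ∀ x ∈ Metric.closedBall xs δ', ∀ i,
      (g xs ys i = 0 → g x (Y x) i = 0 ∧ 0 < Lam x i) ∧
      (g xs ys i ≠ 0 → g x (Y x) i < 0 ∧ Lam x i = 0)) :
    IsUnit (Kmat f h g (activeSet g xs ys) xs ys μs lams) ∧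
      ∃ δ₀ > (0:ℝ), δ₀ ≤ δ' ∧ ∀ x ∈ Metric.closedBall xs δ₀,
        IsUnit (Kmat f h g (activeSet g xs ys) x (Y x) (M x) (Lam x)) :=
  stmt_1_general f h g xs ys μs lams hJU δ' hδ' Y M Lam hJUx hact

end
end

section
/- Let M ∈ ℝ^{n×n}, A ∈ ℝ^{k×n}, C ∈ ℝ^{p×n} be such that the rows of the stacked matrix [A; C] are linearly independent, and suppose ⟨Md,d⟩ > 0 for every nonzero d ∈ ker A. Let ω = diag(ω₁,…,ω_p) with ω_i ∈ [0,1] for every i. Then the block matrix [[M, Aᵀ, Cᵀω],[A, 0, 0],[C, 0, ω − I_p]] of size n+k+p is nonsingular. -/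
/-!
A kernel vector `(x, y, z)` satisfies `Ax = 0` and `Cx = (1 - ω) z`. Pairing the first block row
with `x` gives `⟨Mx, x⟩ + ∑ᵢ (1 - ωᵢ) ωᵢ zᵢ² = 0`, a sum of a term that is positive unless `x = 0`
and a nonnegative one, so `x = 0`. The first block row then reads `Aᵀy + Cᵀ(ωz) = 0`, and
independence of the rows of `[A; C]` gives `y = 0` and `ωz = 0`; with `(ω - 1) z = 0` from the
last block row this forces `z = 0`.
-/

open Matrix

namespace Matrix

variable {R m₁ m₂ n k p : Type*}

lemma eq_zero_of_vecMul_add_vecMul_eq_zero [CommRing R] [Fintype m₁] [Fintype m₂]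
    {A : Matrix m₁ n R} {C : Matrix m₂ n R}
    (hAC : LinearIndependent R (Sum.elim (fun i => A i) (fun i => C i)))
    {y : m₁ → R} {u : m₂ → R} (h : y ᵥ* A + u ᵥ* C = 0) : y = 0 ∧ u = 0 := by
  have hinj : Function.Injective (fromRows A C).vecMul := vecMul_injective_iff.2 hAC
  rw [← Sum.elim_eq_iff, Sum.elim_zero_zero]
  refine hinj ?_
  dsimp only
  rw [sumElim_vecMul_fromRows, h, zero_vecMul]

def kojimaBlock [Ring R] [Fintype p] [DecidableEq p] (M : Matrix n n R) (A : Matrix k n R)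
    (C : Matrix p n R) (w : p → R) : Matrix (n ⊕ k ⊕ p) (n ⊕ k ⊕ p) R :=
  fromBlocks M (fromCols Aᵀ (Cᵀ * diagonal w)) (fromRows A C) (fromBlocks 0 0 0 (diagonal w - 1))

lemma kojimaBlock_mulVec [CommRing R] [Fintype n] [Fintype k] [Fintype p] [DecidableEq p]
    (M : Matrix n n R) (A : Matrix k n R) (C : Matrix p n R) (w : p → R)
    (x : n → R) (y : k → R) (z : p → R) :
    kojimaBlock M A C w *ᵥ Sum.elim x (Sum.elim y z) =
      Sum.elim (M *ᵥ x + Aᵀ *ᵥ y + Cᵀ *ᵥ (w * z)) (Sum.elim (A *ᵥ x) (C *ᵥ x + (w - 1) * z)) := by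
  have hdiag : ∀ v : p → R, diagonal v *ᵥ z = v * z := fun v => funext (mulVec_diagonal v z)
  simp only [kojimaBlock, fromBlocks_mulVec, Sum.elim_comp_inl, Sum.elim_comp_inr, fromCols_mulVec,
    ← mulVec_mulVec, hdiag, fromRows_mulVec, zero_mulVec, add_zero, sub_mulVec, one_mulVec,
    zero_add, ← Sum.elim_add_add, add_assoc, sub_mul, one_mul]

section Ordered

variable [CommRing R] [LinearOrder R] [IsStrictOrderedRing R] [Fintype n] [Fintype k] [Fintype p]

lemma one_sub_mul_dotProduct_mul_nonneg {w : p → R} (hw : ∀ i, w i ∈ Set.Icc (0 : R) 1)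
    (z : p → R) : 0 ≤ ((1 - w) * z) ⬝ᵥ (w * z) :=
  Finset.sum_nonneg fun i _ => by
    obtain ⟨hw0, hw1⟩ := hw i
    calc (0 : R) ≤ (1 - w i) * w i * z i ^ 2 :=
          mul_nonneg (mul_nonneg (sub_nonneg.2 hw1) hw0) (sq_nonneg _)
      _ = ((1 - w) * z) i * (w * z) i := by
          simp only [Pi.mul_apply, Pi.sub_apply, Pi.one_apply]; ring

lemma eq_zero_of_kojimaBlock_equations {M : Matrix n n R} {A : Matrix k n R} {C : Matrix p n R}
    {w : p → R} (hM : ∀ d : n → R, d ≠ 0 → A *ᵥ d = 0 → 0 < d ⬝ᵥ M *ᵥ d)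
    (hw : ∀ i, w i ∈ Set.Icc (0 : R) 1) {x : n → R} {y : k → R} {z : p → R}
    (h₁ : M *ᵥ x + Aᵀ *ᵥ y + Cᵀ *ᵥ (w * z) = 0) (h₂ : A *ᵥ x = 0)
    (h₃ : C *ᵥ x + (w - 1) * z = 0) : x = 0 := by
  by_contra hx
  have hCx : C *ᵥ x = (1 - w) * z := by linear_combination h₃
  have hpair : x ⬝ᵥ M *ᵥ x + ((1 - w) * z) ⬝ᵥ (w * z) = 0 := by
    have := congrArg (x ⬝ᵥ ·) h₁
    simpa only [dotProduct_add, dotProduct_mulVec x Aᵀ, dotProduct_mulVec x Cᵀ, vecMul_transpose,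
      h₂, hCx, zero_dotProduct, add_zero, dotProduct_zero] using this
  linarith [hM x hx h₂, one_sub_mul_dotProduct_mul_nonneg hw z]

end Ordered

theorem isUnit_kojimaBlock [Field R] [LinearOrder R] [IsStrictOrderedRing R]
    [Fintype n] [Fintype k] [Fintype p] [DecidableEq n] [DecidableEq k] [DecidableEq p]
    {M : Matrix n n R} {A : Matrix k n R} {C : Matrix p n R} {w : p → R}
    (hAC : LinearIndependent R (Sum.elim (fun i => A i) (fun i => C i)))
    (hM : ∀ d : n → R, d ≠ 0 → A *ᵥ d = 0 → 0 < d ⬝ᵥ M *ᵥ d)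
    (hw : ∀ i, w i ∈ Set.Icc (0 : R) 1) : IsUnit (kojimaBlock M A C w) := by
  rw [isUnit_iff_isUnit_det, isUnit_iff_ne_zero, Ne, ← exists_mulVec_eq_zero_iff]
  rintro ⟨v, hv0, hv⟩
  obtain ⟨x, y, z, rfl⟩ : ∃ x y z, v = Sum.elim x (Sum.elim y z) :=
    ⟨_, _, _, by rw [Sum.elim_comp_inl_inr, Sum.elim_comp_inl_inr]⟩
  rw [kojimaBlock_mulVec, ← Sum.elim_zero_zero, Sum.elim_eq_iff, ← Sum.elim_zero_zero,
    Sum.elim_eq_iff] at hv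
  obtain ⟨h₁, h₂, h₃⟩ := hv
  obtain rfl : x = 0 := eq_zero_of_kojimaBlock_equations hM hw h₁ h₂ h₃
  simp only [mulVec_zero, zero_add, mulVec_transpose] at h₁ h₃
  obtain ⟨rfl, hwz⟩ := eq_zero_of_vecMul_add_vecMul_eq_zero hAC h₁
  have hz : z = 0 := by linear_combination hwz - h₃
  simp [hz] at hv0

end Matrix

/-- If the rows of `[A; C]` are linearly independent, `⟨Md,d⟩ > 0`
for every nonzero `d ∈ ker A`, and `ω = diag(ω₁,…,ω_p)` with `ωᵢ ∈ [0,1]`, then the block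
matrix `[[M, Aᵀ, Cᵀω],[A,0,0],[C,0,ω−I]]` is nonsingular. -/
theorem stmt_10 {n k p : ℕ} (M : Matrix (Fin n) (Fin n) ℝ) (A : Matrix (Fin k) (Fin n) ℝ)
    (C : Matrix (Fin p) (Fin n) ℝ) (w : Fin p → ℝ)
    (hLI : LinearIndependent ℝ (Sum.elim (fun i => A i) (fun i => C i)))
    (hM : ∀ d : Fin n → ℝ, d ≠ 0 → A *ᵥ d = 0 → 0 < d ⬝ᵥ M *ᵥ d)
    (hw : ∀ i, w i ∈ Set.Icc (0:ℝ) 1) :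
    IsUnit (Matrix.fromBlocks M (Matrix.fromCols Aᵀ (Cᵀ * Matrix.diagonal w))
      (Matrix.fromRows A C) (Matrix.fromBlocks 0 0 0 (Matrix.diagonal w - 1))) :=
  isUnit_kojimaBlock hLI hM hw
end

section
/- Let (x*,y*) ∈ ℝⁿ×ℝᵐ be a point around which f, h, g are twice differentiable and H, G are twice continuously differentiable, and let (x*,u*,v*,y*,μ*,λ*) satisfy the KKT conditions of the constrained minimax problem with λ* − g(x*,y*) > 0 componentwise. Set w* = v* + G(x*) and ξ* = λ* + g(x*,y*), and z* = (x*,u*,v*,y*,μ*,λ*). Then the Kojima mapping F is a locally Lipschitz homeomorphism near (x*,u*,w*,y*,μ*,ξ*) if and only if z* is a strongly regular solution of the generalized equation 0 ∈ 𝓗(z) + N_𝓚(z). -/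
open Matrix
open scoped Classical

noncomputable section

/-!
Write `Π` for the projection onto `𝓚` (positive parts in the `v`- and `λ`-blocks). Up to the sign
of its third block, the Kojima mapping is Robinson's normal map `ζ ↦ 𝓗(Π ζ) + ζ − Π ζ`, and the
KKT conditions say that `Π ζ* = z*` and that `ζ*` is a zero of it. Since `𝓗` is `C¹`, this normal
map differs from the normal map of the linearization `T z = 𝓗(z*) + J𝓗(z*)(z − z*)` by a map with
arbitrarily small Lipschitz constant near `ζ*`, and being a Lipschitz homeomorphism survives such
perturbations (the perturbed map composed with the local inverse is a small perturbation of the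
identity, hence locally invertible by the contraction principle). Finally `ζ ↦ Π ζ` and
`z ↦ z + (η − T z)` are inverse bijections between the solutions of `normalMap T ζ = η` and those
of `η ∈ T z + N_𝓚(z)`, which turns a Lipschitz local inverse of `normalMap T` into the Lipschitz
solution map of strong regularity and back.
-/

open Filter Topology Metric Set Function
open scoped NNReal

section LocLipHomeo

variable {E : Type*} [NormedAddCommGroup E] {F : E → E} {p : E}

theorem locLipHomeo_iff :
    LocLipHomeo F p ↔ ∃ U ∈ 𝓝 p, (∃ K, LipschitzOnWith K F U) ∧
      (∃ K : ℝ≥0, ∀ a ∈ U, ∀ b ∈ U, dist a b ≤ K * dist (F a) (F b)) ∧ F '' U ∈ 𝓝 (F p) := by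
  constructor
  · rintro ⟨U, hU, V, hV, Ψ, himg, -, hlft, -, hF, K, hΨ⟩
    refine ⟨U, hU, hF, ⟨K, fun a ha b hb => ?_⟩, himg ▸ hV⟩
    have hFU : MapsTo F U V := himg ▸ mapsTo_image F U
    simpa only [hlft a ha, hlft b hb] using hΨ.dist_le_mul _ (hFU ha) _ (hFU hb)
  · rintro ⟨U, hU, hF, ⟨K, hanti⟩, hV⟩
    have hinj : InjOn F U := fun a ha b hb hab =>
      dist_le_zero.1 (by simpa [hab] using hanti a ha b hb)
    have hsurj : SurjOn F U (F '' U) := surjOn_image F U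
    refine ⟨U, hU, F '' U, hV, invFunOn F U, rfl, hsurj.mapsTo_invFunOn,
      fun a ha => hinj.leftInvOn_invFunOn ha, fun b hb => hsurj.rightInvOn_invFunOn hb, hF,
      K, LipschitzOnWith.of_dist_le_mul fun b hb b' hb' => ?_⟩
    simpa only [hsurj.rightInvOn_invFunOn hb, hsurj.rightInvOn_invFunOn hb'] using
      hanti _ (hsurj.mapsTo_invFunOn hb) _ (hsurj.mapsTo_invFunOn hb')

theorem LocLipHomeo.comp_involutive {D : E → E} {K : ℝ≥0} (hD : Function.Involutive D)
    (hDlip : LipschitzWith K D) (hF : LocLipHomeo F p) : LocLipHomeo (D ∘ F) p := by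
  obtain ⟨U, hU, ⟨L, hL⟩, ⟨L', hanti⟩, hV⟩ := locLipHomeo_iff.1 hF
  refine locLipHomeo_iff.2 ⟨U, hU, ⟨K * L, hDlip.comp_lipschitzOnWith hL⟩,
    ⟨L' * K, fun a ha b hb => ?_⟩, ?_⟩
  · calc dist a b ≤ L' * dist (D (D (F a))) (D (D (F b))) := by
          simpa only [hD _] using hanti a ha b hb
      _ ≤ L' * (K * dist (D (F a)) (D (F b))) := by gcongr; exact hDlip.dist_le_mul _ _
      _ = ↑(L' * K) * dist ((D ∘ F) a) ((D ∘ F) b) := by rw [NNReal.coe_mul, mul_assoc]; rfl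
  · rw [image_comp, image_eq_preimage_of_inverse hD.leftInverse hD.rightInverse]
    refine hDlip.continuous.continuousAt.preimage_mem_nhds ?_
    simpa only [Function.comp_apply, hD _] using hV

theorem Function.Involutive.locLipHomeo_comp_iff {D : E → E} {K : ℝ≥0}
    (hD : Function.Involutive D) (hDlip : LipschitzWith K D) :
    LocLipHomeo (D ∘ F) p ↔ LocLipHomeo F p := by
  refine ⟨fun h => ?_, LocLipHomeo.comp_involutive hD hDlip⟩
  simpa only [← Function.comp_assoc, hD.comp_self, Function.id_comp] using
    h.comp_involutive hD hDlip

theorem locLipHomeo_of_leftInvOn_of_rightInvOn {Ψ : E → E} {U W : Set E} {K K' : ℝ≥0}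
    (hU : U ∈ 𝓝 p) (hW : W ∈ 𝓝 (F p)) (hF : LipschitzOnWith K F U)
    (hΨ : LipschitzOnWith K' Ψ W) (hleft : ∀ a ∈ U, F a ∈ W ∧ Ψ (F a) = a)
    (hright : ∀ b ∈ W, F (Ψ b) = b) : LocLipHomeo F p := by
  refine locLipHomeo_iff.2 ⟨U, hU, ⟨K, hF⟩, ⟨K', fun a ha b hb => ?_⟩, ?_⟩
  · simpa only [(hleft a ha).2, (hleft b hb).2] using
      hΨ.dist_le_mul _ (hleft a ha).1 _ (hleft b hb).1
  · have hΨU : Ψ ⁻¹' U ∈ 𝓝 (F p) := by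
      refine (hΨ.continuousOn.continuousAt hW).preimage_mem_nhds ?_
      rwa [(hleft p (mem_of_mem_nhds hU)).2]
    exact mem_of_superset (inter_mem hW hΨU) fun b hb => ⟨Ψ b, hb.2, hright b hb.1⟩

end LocLipHomeo

section Perturbation

section Metric

variable {E E' : Type*} [PseudoMetricSpace E] [NormedAddCommGroup E']

def StronglyApproximates (G F : E → E') (p : E) : Prop :=
  ∀ c : ℝ≥0, 0 < c → ∃ s ∈ 𝓝 p, LipschitzOnWith c (G - F) s

theorem StronglyApproximates.symm {G F : E → E'} {p : E} (h : StronglyApproximates G F p) :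
    StronglyApproximates F G p :=
  fun c hc => (h c hc).imp fun _ ⟨hs, hGF⟩ => ⟨hs, by simpa only [neg_sub] using hGF.neg⟩

theorem dist_le_two_mul_of_lipschitzOnWith_sub {F G : E → E'} {s : Set E} {L c : ℝ≥0}
    (hF : ∀ a ∈ s, ∀ b ∈ s, dist a b ≤ L * dist (F a) (F b)) (hGF : LipschitzOnWith c (G - F) s)
    (hcL : (c : ℝ) * L ≤ 1 / 2) {a b : E} (ha : a ∈ s) (hb : b ∈ s) :
    dist a b ≤ 2 * L * dist (G a) (G b) := by
  have hFG : dist (F a) (F b) ≤ dist (G a) (G b) + c * dist a b :=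
    calc dist (F a) (F b) = dist (G a - (G - F) a) (G b - (G - F) b) := by simp
      _ ≤ dist (G a) (G b) + dist ((G - F) a) ((G - F) b) := dist_sub_sub_le _ _ _ _
      _ ≤ dist (G a) (G b) + c * dist a b := by gcongr; exact hGF.dist_le_mul a ha b hb
  have : (L : ℝ) * (c * dist a b) ≤ 1 / 2 * dist a b := by
    rw [← mul_assoc, mul_comm (L : ℝ)]; gcongr
  nlinarith [hF a ha b hb, dist_nonneg (x := G a) (y := G b), L.coe_nonneg]

end Metric

variable {E : Type*} [NormedAddCommGroup E] [NormedSpace ℝ E] [CompleteSpace E]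

theorem image_mem_nhds_of_approximatesLinearOn_id {χ : E → E} {s : Set E} {q : E} {c : ℝ≥0}
    (hc : c < 1) (hs : s ∈ 𝓝 q) (hχ : ApproximatesLinearOn χ (ContinuousLinearMap.id ℝ E) s c) :
    χ '' s ∈ 𝓝 (χ q) := by
  have hχ' : ApproximatesLinearOn χ (ContinuousLinearEquiv.refl ℝ E : E →L[ℝ] E) s c := hχ
  rcases subsingleton_or_nontrivial E with hE | hE
  · exact hχ'.image_mem_nhds (ContinuousLinearEquiv.refl ℝ E).toNonlinearRightInverse hs
      (Or.inl hE)
  · refine hχ'.image_mem_nhds (ContinuousLinearEquiv.refl ℝ E).toNonlinearRightInverse hs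
      (Or.inr ?_)
    show c < ‖((ContinuousLinearEquiv.refl ℝ E).symm : E →L[ℝ] E)‖₊⁻¹
    rwa [ContinuousLinearEquiv.refl_symm, ContinuousLinearEquiv.coe_refl,
      ContinuousLinearMap.nnnorm_id, inv_one]

theorem LocLipHomeo.of_stronglyApproximates {F G : E → E} {p : E} (hF : LocLipHomeo F p)
    (hGF : StronglyApproximates G F p) : LocLipHomeo G p := by
  obtain ⟨U, hU, V, hV, Ψ, himg, -, hlft, hrgt, ⟨L₁, hL₁⟩, ⟨L₂, hL₂⟩⟩ := hF
  set c : ℝ≥0 := (2 * L₂ + 1)⁻¹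
  have hcL : (c : ℝ) * L₂ ≤ 1 / 2 := by
    simp only [c, NNReal.coe_inv, NNReal.coe_add, NNReal.coe_mul, NNReal.coe_ofNat,
      NNReal.coe_one]
    rw [inv_mul_le_iff₀ (by positivity)]
    linarith
  obtain ⟨s, hs, hGFs⟩ := hGF c (by positivity)
  have hpU : p ∈ U := mem_of_mem_nhds hU
  set V' := V ∩ Ψ ⁻¹' (U ∩ s)
  have hV' : V' ∈ 𝓝 (F p) := by
    refine inter_mem hV ((hL₂.continuousOn.continuousAt hV).preimage_mem_nhds ?_)
    rw [hlft p hpU]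
    exact inter_mem hU hs
  -- near `F p`, `G ∘ Ψ` is a perturbation of the identity by a `c * L₂`-Lipschitz map
  have happrox : ApproximatesLinearOn (G ∘ Ψ) (ContinuousLinearMap.id ℝ E) V' (c * L₂) := by
    rintro x ⟨hxV, hxs⟩ y ⟨hyV, hys⟩
    have hxy : G (Ψ x) - G (Ψ y) - (x - y) = (G - F) (Ψ x) - (G - F) (Ψ y) := by
      simp only [Pi.sub_apply, hrgt x hxV, hrgt y hyV]; abel
    calc ‖(G ∘ Ψ) x - (G ∘ Ψ) y - ContinuousLinearMap.id ℝ E (x - y)‖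
        = ‖(G - F) (Ψ x) - (G - F) (Ψ y)‖ := by rw [← hxy]; rfl
      _ ≤ c * ‖Ψ x - Ψ y‖ := hGFs.norm_sub_le hxs.2 hys.2
      _ ≤ c * (L₂ * ‖x - y‖) := by gcongr; exact hL₂.norm_sub_le hxV hyV
      _ = ↑(c * L₂) * ‖x - y‖ := by push_cast; ring
  refine locLipHomeo_iff.2 ⟨U ∩ s, inter_mem hU hs, ⟨L₁ + c, ?_⟩, ⟨2 * L₂, ?_⟩, ?_⟩
  · simpa using (hL₁.mono inter_subset_left).add (hGFs.mono inter_subset_right)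
  · have hFU : MapsTo F U V := himg ▸ mapsTo_image F U
    have hFinv : ∀ a ∈ U ∩ s, ∀ b ∈ U ∩ s, dist a b ≤ L₂ * dist (F a) (F b) :=
      fun a ha b hb => by
        simpa only [hlft a ha.1, hlft b hb.1] using hL₂.dist_le_mul _ (hFU ha.1) _ (hFU hb.1)
    exact fun a ha b hb => by
      exact_mod_cast dist_le_two_mul_of_lipschitzOnWith_sub hFinv (hGFs.mono inter_subset_right)
        hcL ha hb
  · have himage := image_mem_nhds_of_approximatesLinearOn_id ?_ hV' happrox
    · rw [Function.comp_apply, hlft p hpU, image_comp] at himage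
      exact mem_of_superset himage (image_mono (image_subset_iff.2 fun _ hx => hx.2))
    · rw [← NNReal.coe_lt_coe]; push_cast; linarith

theorem StronglyApproximates.locLipHomeo_iff {F G : E → E} {p : E}
    (hGF : StronglyApproximates G F p) : LocLipHomeo G p ↔ LocLipHomeo F p :=
  ⟨fun hG => hG.of_stronglyApproximates hGF.symm, fun hF => hF.of_stronglyApproximates hGF⟩

end Perturbation

section Projection

variable {n n₁ n₂ m m₁ m₂ : ℕ}

def projK (z : ZSpace n n₁ n₂ m m₁ m₂) : ZSpace n n₁ n₂ m m₁ m₂ :=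
  (z.1, z.2.1, vecPos z.2.2.1, z.2.2.2.1, z.2.2.2.2.1, vecPos z.2.2.2.2.2)

theorem sub_vecPos {p : ℕ} (w : Vec p) : w - vecPos w = vecNeg w := by
  funext i
  simp only [Pi.sub_apply, vecPos, vecNeg]
  rcases le_total 0 (w i) with hw | hw <;> simp [hw]

theorem vecPos_lipschitzWith {p : ℕ} : LipschitzWith 1 (vecPos : Vec p → Vec p) :=
  LipschitzWith.of_dist_le_mul fun a b => by
    rw [NNReal.coe_one, one_mul, dist_pi_le_iff dist_nonneg]
    intro i
    calc dist (max 0 (a i)) (max 0 (b i)) ≤ dist (a i) (b i) := by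
          simpa only [Real.dist_eq, max_comm] using abs_max_sub_max_le_abs (a i) (b i) 0
      _ ≤ dist a b := dist_le_pi_dist a b i

theorem projK_lipschitzWith : LipschitzWith 1 (projK : ZSpace n n₁ n₂ m m₁ m₂ → _) :=
  LipschitzWith.of_dist_le_mul fun a b => by
    have h₃ := vecPos_lipschitzWith.dist_le_mul a.2.2.1 b.2.2.1
    have h₆ := vecPos_lipschitzWith.dist_le_mul a.2.2.2.2.2 b.2.2.2.2.2
    simp only [NNReal.coe_one, one_mul, projK, Prod.dist_eq] at h₃ h₆ ⊢
    gcongr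

theorem projK_mem_Kcone (ζ : ZSpace n n₁ n₂ m m₁ m₂) : projK ζ ∈ Kcone :=
  ⟨fun _ => le_max_left _ _, fun _ => le_max_left _ _⟩

theorem sub_vecPos_dotProduct_nonpos {p : ℕ} (w z : Vec p) (hz : ∀ i, 0 ≤ z i) :
    (w - vecPos w) ⬝ᵥ (z - vecPos w) ≤ 0 := by
  refine Finset.sum_nonpos fun i _ => ?_
  simp only [Pi.sub_apply, vecPos]
  rcases le_total 0 (w i) with hw | hw
  · simp [max_eq_right hw]
  · rw [max_eq_left hw, sub_zero, sub_zero]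
    exact mul_nonpos_of_nonpos_of_nonneg hw (hz i)

theorem sub_projK_mem_normalCone (ζ : ZSpace n n₁ n₂ m m₁ m₂) :
    ζ - projK ζ ∈ normalCone Kcone (projK ζ) := by
  refine ⟨projK_mem_Kcone ζ, fun z hz => ?_⟩
  simp only [pairZ, projK, Prod.fst_sub, Prod.snd_sub, sub_self, zero_dotProduct, zero_add,
    add_zero]
  exact add_nonpos (sub_vecPos_dotProduct_nonpos _ _ hz.1)
    (sub_vecPos_dotProduct_nonpos _ _ hz.2)

theorem eq_zero_of_pairZ_self_nonpos {d : ZSpace n n₁ n₂ m m₁ m₂} (hd : pairZ d d ≤ 0) :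
    d = 0 := by
  have h : ∀ {p : ℕ} (v : Vec p), 0 ≤ v ⬝ᵥ v := fun v =>
    Finset.sum_nonneg fun i _ => mul_self_nonneg (v i)
  have h₁ := h d.1; have h₂ := h d.2.1; have h₃ := h d.2.2.1; have h₄ := h d.2.2.2.1
  have h₅ := h d.2.2.2.2.1; have h₆ := h d.2.2.2.2.2
  simp only [pairZ] at hd
  refine Prod.ext ?_ (Prod.ext ?_ (Prod.ext ?_ (Prod.ext ?_ (Prod.ext ?_ ?_)))) <;>
    exact dotProduct_self_eq_zero.1 (by linarith)

theorem eq_of_add_mem_normalCone {K : Set (ZSpace n n₁ n₂ m m₁ m₂)}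
    {z z' ν ν' : ZSpace n n₁ n₂ m m₁ m₂} (hν : ν ∈ normalCone K z) (hν' : ν' ∈ normalCone K z')
    (h : z + ν = z' + ν') : z = z' := by
  have h₁ := hν.2 z' hν'.1
  have h₂ := hν'.2 z hν.1
  have hνν' : ν' = z + ν - z' := by rw [h]; abel
  subst hνν'
  -- monotonicity of the normal cone
  have : pairZ (z' - z) (z' - z) = pairZ ν (z' - z) + pairZ (z + ν - z') (z - z') := by
    simp only [pairZ, Prod.fst_sub, Prod.snd_sub, Prod.fst_add, Prod.snd_add, sub_dotProduct,
      add_dotProduct, dotProduct_sub]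
    ring
  exact (sub_eq_zero.1 (eq_zero_of_pairZ_self_nonpos (by linarith))).symm

theorem projK_eq_iff {ζ z : ZSpace n n₁ n₂ m m₁ m₂} :
    projK ζ = z ↔ ζ - z ∈ normalCone Kcone z := by
  constructor
  · rintro rfl
    exact sub_projK_mem_normalCone ζ
  · intro h
    exact eq_of_add_mem_normalCone (sub_projK_mem_normalCone ζ) h (by abel)

end Projection

section NormalMap

variable {n n₁ n₂ m m₁ m₂ : ℕ}

/-- Robinson's normal map of the generalized equation `0 ∈ T(z) + N_𝓚(z)`. -/
def normalMap (T : ZSpace n n₁ n₂ m m₁ m₂ → ZSpace n n₁ n₂ m m₁ m₂) (ζ : ZSpace n n₁ n₂ m m₁ m₂) :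
    ZSpace n n₁ n₂ m m₁ m₂ :=
  T (projK ζ) + (ζ - projK ζ)

theorem projK_eq_and_normalMap_eq_iff {T : ZSpace n n₁ n₂ m m₁ m₂ → ZSpace n n₁ n₂ m m₁ m₂}
    {ζ z η : ZSpace n n₁ n₂ m m₁ m₂} :
    projK ζ = z ∧ normalMap T ζ = η ↔ η - T z ∈ normalCone Kcone z ∧ ζ = z + (η - T z) := by
  constructor
  · rintro ⟨rfl, rfl⟩
    refine ⟨by simpa [normalMap] using sub_projK_mem_normalCone ζ, by simp [normalMap]⟩
  · rintro ⟨hν, rfl⟩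
    have hz : projK (z + (η - T z)) = z := projK_eq_iff.2 (by simpa using hν)
    exact ⟨hz, by rw [normalMap, hz]; abel⟩

theorem LipschitzWith.normalMap {T : ZSpace n n₁ n₂ m m₁ m₂ → ZSpace n n₁ n₂ m m₁ m₂} {K : ℝ≥0}
    (hT : LipschitzWith K T) : LipschitzWith (K + 2) (normalMap T) := by
  have h : LipschitzWith (K * 1 + (1 + 1)) (_root_.normalMap T) :=
    (hT.comp projK_lipschitzWith).add (LipschitzWith.id.sub projK_lipschitzWith)
  simpa only [mul_one, one_add_one_eq_two] using h

theorem lipschitzWith_affine {E : Type*} [NormedAddCommGroup E] [NormedSpace ℝ E] (κ z₀ : E)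
    (A : E →L[ℝ] E) : LipschitzWith ‖A‖₊ fun z => κ + A (z - z₀) :=
  LipschitzWith.of_dist_le_mul fun a b => by
    simpa only [dist_eq_norm, add_sub_add_left_eq_sub, ← map_sub, sub_sub_sub_cancel_right,
      coe_nnnorm] using A.le_opNorm (a - b)

variable {Φ : ZSpace n n₁ n₂ m m₁ m₂ → ZSpace n n₁ n₂ m m₁ m₂} {zs ζs : ZSpace n n₁ n₂ m m₁ m₂}

theorem normalMap_linearization_eq_zero (hproj : projK ζs = zs) (hsol : normalMap Φ ζs = 0) :
    normalMap (fun z => Φ zs + fderiv ℝ Φ zs (z - zs)) ζs = 0 := by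
  simpa [normalMap, hproj] using hsol

theorem StrongRegular.locLipHomeo_normalMap (hproj : projK ζs = zs) (hsol : normalMap Φ ζs = 0)
    (hSR : StrongRegular Φ Kcone zs) :
    LocLipHomeo (normalMap fun z => Φ zs + fderiv ℝ Φ zs (z - zs)) ζs := by
  obtain ⟨δ, hδ, ε, hε, zhat, hzhat, L, hL⟩ := hSR
  set T := fun z => Φ zs + fderiv ℝ Φ zs (z - zs)
  have hT := lipschitzWith_affine (Φ zs) zs (fderiv ℝ Φ zs)
  have hN0 : normalMap T ζs = 0 := normalMap_linearization_eq_zero hproj hsol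
  have hU : projK ⁻¹' closedBall zs ε ∩ normalMap T ⁻¹' closedBall 0 δ ∈ 𝓝 ζs := by
    refine inter_mem (projK_lipschitzWith.continuous.continuousAt.preimage_mem_nhds ?_)
      (hT.normalMap.continuous.continuousAt.preimage_mem_nhds ?_)
    · rw [hproj]; exact closedBall_mem_nhds zs hε
    · rw [hN0]; exact closedBall_mem_nhds 0 hδ
  refine locLipHomeo_of_leftInvOn_of_rightInvOn (Ψ := fun η => zhat η + (η - T (zhat η))) hU
    (by rw [hN0]; exact closedBall_mem_nhds 0 hδ) hT.normalMap.lipschitzOnWith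
    (hL.add (LipschitzWith.id.lipschitzOnWith.sub (hT.comp_lipschitzOnWith hL)))
    (fun ζ ⟨hζ, hNζ⟩ => ⟨hNζ, ?_⟩) fun η hη => ?_
  · obtain ⟨hν, hζ_eq⟩ := (projK_eq_and_normalMap_eq_iff (T := T) (ζ := ζ)).1 ⟨rfl, rfl⟩
    have hz : projK ζ = zhat (normalMap T ζ) := (hzhat _ hNζ).2.2 _ hζ hν
    show zhat (normalMap T ζ) + (normalMap T ζ - T (zhat (normalMap T ζ))) = ζ
    rw [← hz]
    exact hζ_eq.symm
  · show normalMap T (zhat η + (η - T (zhat η))) = η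
    exact ((projK_eq_and_normalMap_eq_iff (T := T)).2 ⟨(hzhat η hη).2.1, rfl⟩).2

theorem StrongRegular.of_locLipHomeo_normalMap (hproj : projK ζs = zs) (hsol : normalMap Φ ζs = 0)
    (hF : LocLipHomeo (normalMap fun z => Φ zs + fderiv ℝ Φ zs (z - zs)) ζs) :
    StrongRegular Φ Kcone zs := by
  obtain ⟨U, hU, V, hV, Ψ, -, -, hlft, hrgt, -, L, hL⟩ := hF
  set T := fun z => Φ zs + fderiv ℝ Φ zs (z - zs)
  have hN0 : normalMap T ζs = 0 := normalMap_linearization_eq_zero hproj hsol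
  rw [hN0] at hV
  have hΨ0 : Ψ 0 = ζs := by simpa [hN0] using hlft ζs (mem_of_mem_nhds hU)
  -- a solution `z` of `η ∈ T z + N(z)` corresponds to the zero `z + (η - T z)` of the normal map
  have hlift : (fun q : ZSpace n n₁ n₂ m m₁ m₂ × ZSpace n n₁ n₂ m m₁ m₂ =>
      q.1 + (q.2 - T q.1)) ⁻¹' U ∈ 𝓝 (zs, 0) := by
    refine ContinuousAt.preimage_mem_nhds (by fun_prop) ?_
    have : zs + (0 - T zs) = ζs := by
      simp only [normalMap, hproj] at hsol
      simp only [T, sub_self, map_zero, add_zero, zero_sub]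
      rw [← sub_eq_zero, show zs + -Φ zs - ζs = -(Φ zs + (ζs - zs)) by abel, hsol, neg_zero]
    rwa [this]
  obtain ⟨u, hu, v, hv, huv⟩ := mem_nhds_prod_iff.1 hlift
  obtain ⟨ε, hε, hεu⟩ := nhds_basis_closedBall.mem_iff.1 hu
  have hW : v ∩ V ∩ Ψ ⁻¹' closedBall ζs ε ∈ 𝓝 0 := by
    refine inter_mem (inter_mem hv hV) ((hL.continuousOn.continuousAt hV).preimage_mem_nhds ?_)
    rw [hΨ0]; exact closedBall_mem_nhds ζs hε
  obtain ⟨δ, hδ, hδW⟩ := nhds_basis_closedBall.mem_iff.1 hW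
  refine ⟨δ, hδ, ε, hε, projK ∘ Ψ, fun η hη => ?_,
    1 * L, projK_lipschitzWith.comp_lipschitzOnWith (hL.mono fun η hη => (hδW hη).1.2)⟩
  obtain ⟨⟨hηv, hηV⟩, hΨη⟩ := hδW hη
  refine ⟨?_, (projK_eq_and_normalMap_eq_iff.1 ⟨rfl, hrgt η hηV⟩).1, fun z hz hzν => ?_⟩
  · have h := projK_lipschitzWith.dist_le_mul (Ψ η) ζs
    rw [NNReal.coe_one, one_mul, hproj] at h
    exact h.trans hΨη
  · obtain ⟨hζz, hζη⟩ := (projK_eq_and_normalMap_eq_iff (T := T)).2 ⟨hzν, rfl⟩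
    have hζU : z + (η - T z) ∈ U := huv (mk_mem_prod (hεu hz) hηv)
    rw [Function.comp_apply, ← hζη, hlft _ hζU, hζz]

theorem strongRegular_iff_locLipHomeo_normalMap (hproj : projK ζs = zs)
    (hsol : normalMap Φ ζs = 0) :
    StrongRegular Φ Kcone zs ↔
      LocLipHomeo (normalMap fun z => Φ zs + fderiv ℝ Φ zs (z - zs)) ζs :=
  ⟨StrongRegular.locLipHomeo_normalMap hproj hsol,
    StrongRegular.of_locLipHomeo_normalMap hproj hsol⟩

theorem HasStrictFDerivAt.stronglyApproximates_normalMap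
    {A : ZSpace n n₁ n₂ m m₁ m₂ →L[ℝ] ZSpace n n₁ n₂ m m₁ m₂} (hΦ : HasStrictFDerivAt Φ A zs)
    (hproj : projK ζs = zs) :
    StronglyApproximates (normalMap Φ) (normalMap fun z => Φ zs + A (z - zs)) ζs := by
  intro c hc
  obtain ⟨s, hs, hΦs⟩ := hΦ.approximates_deriv_on_nhds (Or.inr hc)
  refine ⟨projK ⁻¹' s, projK_lipschitzWith.continuous.continuousAt.preimage_mem_nhds
    (hproj ▸ hs), ?_⟩
  have hdiff : normalMap Φ - normalMap (fun z => Φ zs + A (z - zs)) =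
      fun ζ => (Φ - ⇑A) (projK ζ) - (Φ zs - A zs) := by
    funext ζ
    simp only [normalMap, Pi.sub_apply, map_sub]
    abel
  rw [hdiff]
  simpa using (hΦs.lipschitzOnWith.comp projK_lipschitzWith.lipschitzOnWith
    (mapsTo_preimage _ _)).sub (LipschitzWith.const (Φ zs - A zs)).lipschitzOnWith

end NormalMap

section Kojima

variable {n m n₁ n₂ m₁ m₂ : ℕ}

def negThird (z : ZSpace n n₁ n₂ m m₁ m₂) : ZSpace n n₁ n₂ m m₁ m₂ :=
  (z.1, z.2.1, -z.2.2.1, z.2.2.2)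

theorem negThird_involutive : Function.Involutive (negThird : ZSpace n n₁ n₂ m m₁ m₂ → _) :=
  fun z => by simp [negThird]

theorem negThird_lipschitzWith : LipschitzWith 1 (negThird : ZSpace n n₁ n₂ m m₁ m₂ → _) :=
  LipschitzWith.of_dist_le_mul fun a b => by simp [negThird, Prod.dist_eq, dist_neg_neg]

theorem kojima_eq_negThird_comp_normalMap (f : Vec n → Vec m → ℝ) (h : Vec n → Vec m → Vec m₁)
    (g : Vec n → Vec m → Vec m₂) (H : Vec n → Vec n₁) (G : Vec n → Vec n₂) :
    Kojima f h g H G = negThird ∘ normalMap (Hmap f h g H G) := by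
  funext ζ
  refine Prod.ext ?_ (Prod.ext ?_ (Prod.ext ?_ (Prod.ext ?_ (Prod.ext ?_ ?_)))) <;>
    simp [Kojima, negThird, normalMap, Hmap, projK, sub_vecPos]
  abel

theorem vecPos_add_of_mul_eq_zero {p : ℕ} {v w : Vec p} (hv : ∀ i, 0 ≤ v i) (hw : ∀ i, w i ≤ 0)
    (hvw : ∀ i, v i * w i = 0) : vecPos (v + w) = v := by
  funext i
  rcases mul_eq_zero.1 (hvw i) with h0 | h0 <;>
    simp [vecPos, h0, hv i, hw i]

end Kojima

section Smoothness

variable {n m n₁ n₂ m₁ m₂ : ℕ} {E : Type*} [NormedAddCommGroup E] [NormedSpace ℝ E] {e₀ : E}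

theorem ContDiffAt.grad_comp {k : ℕ} {L : E → Vec k → ℝ} {φ : E → Vec k}
    (hL : ContDiffAt ℝ 2 (Function.uncurry L) (e₀, φ e₀)) (hφ : ContDiffAt ℝ 1 φ e₀) :
    ContDiffAt ℝ 1 (fun e => grad (L e) (φ e)) e₀ :=
  contDiffAt_pi.2 fun _ => (hL.fderiv hφ (by norm_num)).clm_apply contDiffAt_const

theorem ContDiffAt.jac_transpose_mulVec {k l : ℕ} {H : Vec k → Vec l} {φ : E → Vec k}
    {ψ : E → Vec l} (hH : ContDiffAt ℝ 2 H (φ e₀)) (hφ : ContDiffAt ℝ 1 φ e₀)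
    (hψ : ContDiffAt ℝ 1 ψ e₀) : ContDiffAt ℝ 1 (fun e => (jac H (φ e))ᵀ *ᵥ ψ e) e₀ := by
  refine contDiffAt_pi.2 fun i => ?_
  simp only [mulVec, dotProduct, transpose_apply, jac]
  exact ContDiffAt.sum fun j _ =>
    ((((contDiffAt_pi.1 hH j).fderiv_right (m := 1) (by norm_num)).comp e₀ hφ).clm_apply
      contDiffAt_const).mul (contDiffAt_pi.1 hψ j)

theorem contDiffAt_lag {f : Vec n → Vec m → ℝ} {h : Vec n → Vec m → Vec m₁}
    {g : Vec n → Vec m → Vec m₂} {xs : Vec n} {ys : Vec m}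
    (hf : ContDiffAt ℝ 2 (fun p : Vec n × Vec m => f p.1 p.2) (xs, ys))
    (hh : ContDiffAt ℝ 2 (fun p : Vec n × Vec m => h p.1 p.2) (xs, ys))
    (hg : ContDiffAt ℝ 2 (fun p : Vec n × Vec m => g p.1 p.2) (xs, ys)) (μ : Vec m₁)
    (lam : Vec m₂) :
    ContDiffAt ℝ 2 (fun q : Vec n × Vec m × Vec m₁ × Vec m₂ =>
      Lag f h g q.1 q.2.1 q.2.2.1 q.2.2.2) (xs, ys, μ, lam) := by
  have hxy : ContDiffAt ℝ 2 (fun q : Vec n × Vec m × Vec m₁ × Vec m₂ => (q.1, q.2.1))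
      (xs, ys, μ, lam) := by fun_prop
  have hμ (j : Fin m₁) : ContDiffAt ℝ 2 (fun q : Vec n × Vec m × Vec m₁ × Vec m₂ => q.2.2.1 j)
      (xs, ys, μ, lam) := by fun_prop
  have hlam (i : Fin m₂) : ContDiffAt ℝ 2
      (fun q : Vec n × Vec m × Vec m₁ × Vec m₂ => q.2.2.2 i) (xs, ys, μ, lam) := by fun_prop
  have hf' : ContDiffAt ℝ 2 (fun q : Vec n × Vec m × Vec m₁ × Vec m₂ => f q.1 q.2.1)
      (xs, ys, μ, lam) := (hf.comp (xs, ys, μ, lam) hxy :)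
  have hh' (j : Fin m₁) : ContDiffAt ℝ 2
      (fun q : Vec n × Vec m × Vec m₁ × Vec m₂ => h q.1 q.2.1 j) (xs, ys, μ, lam) :=
    ((contDiffAt_pi.1 hh j).comp (xs, ys, μ, lam) hxy :)
  have hg' (i : Fin m₂) : ContDiffAt ℝ 2
      (fun q : Vec n × Vec m × Vec m₁ × Vec m₂ => g q.1 q.2.1 i) (xs, ys, μ, lam) :=
    ((contDiffAt_pi.1 hg i).comp (xs, ys, μ, lam) hxy :)
  exact (hf'.add (ContDiffAt.sum fun j _ => (hμ j).mul (hh' j))).sub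
    (ContDiffAt.sum fun i _ => (hlam i).mul (hg' i))

theorem contDiffAt_Hmap {f : Vec n → Vec m → ℝ} {h : Vec n → Vec m → Vec m₁}
    {g : Vec n → Vec m → Vec m₂} {H : Vec n → Vec n₁} {G : Vec n → Vec n₂}
    {xs : Vec n} {us : Vec n₁} {vs : Vec n₂} {ys : Vec m} {μs : Vec m₁} {lams : Vec m₂}
    (hf : ContDiffAt ℝ 2 (fun p : Vec n × Vec m => f p.1 p.2) (xs, ys))
    (hh : ContDiffAt ℝ 2 (fun p : Vec n × Vec m => h p.1 p.2) (xs, ys))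
    (hg : ContDiffAt ℝ 2 (fun p : Vec n × Vec m => g p.1 p.2) (xs, ys))
    (hH : ContDiffAt ℝ 2 H xs) (hG : ContDiffAt ℝ 2 G xs) :
    ContDiffAt ℝ 1 (Hmap f h g H G) (xs, us, vs, ys, μs, lams) := by
  set zs : ZSpace n n₁ n₂ m m₁ m₂ := (xs, us, vs, ys, μs, lams)
  have hL := contDiffAt_lag hf hh hg μs lams
  have hx' : ContDiffAt ℝ 2 (fun q : ZSpace n n₁ n₂ m m₁ m₂ × Vec n =>
      (q.2, q.1.2.2.2.1, q.1.2.2.2.2.1, q.1.2.2.2.2.2)) (zs, xs) := by fun_prop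
  have hy' : ContDiffAt ℝ 2 (fun q : ZSpace n n₁ n₂ m m₁ m₂ × Vec m =>
      (q.1.1, q.2, q.1.2.2.2.2.1, q.1.2.2.2.2.2)) (zs, ys) := by fun_prop
  have hgradX : ContDiffAt ℝ 1 (fun z : ZSpace n n₁ n₂ m m₁ m₂ =>
      gradX f h g z.1 z.2.2.2.1 z.2.2.2.2.1 z.2.2.2.2.2) zs :=
    ContDiffAt.grad_comp
      (L := fun (z : ZSpace n n₁ n₂ m m₁ m₂) x => Lag f h g x z.2.2.2.1 z.2.2.2.2.1 z.2.2.2.2.2)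
      (hL.comp (zs, xs) hx' :) (by fun_prop)
  have hgradY : ContDiffAt ℝ 1 (fun z : ZSpace n n₁ n₂ m m₁ m₂ =>
      gradY f h g z.1 z.2.2.2.1 z.2.2.2.2.1 z.2.2.2.2.2) zs :=
    ContDiffAt.grad_comp
      (L := fun (z : ZSpace n n₁ n₂ m m₁ m₂) y => Lag f h g z.1 y z.2.2.2.2.1 z.2.2.2.2.2)
      (hL.comp (zs, ys) hy' :) (by fun_prop)
  have hxy : ContDiffAt ℝ 1 (fun z : ZSpace n n₁ n₂ m m₁ m₂ => (z.1, z.2.2.2.1)) zs := by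
    fun_prop
  have hx : ContDiffAt ℝ 1 (fun z : ZSpace n n₁ n₂ m m₁ m₂ => z.1) zs := by fun_prop
  have hh' : ContDiffAt ℝ 1 (fun z : ZSpace n n₁ n₂ m m₁ m₂ => h z.1 z.2.2.2.1) zs :=
    ((hh.of_le (by norm_num)).comp zs hxy :)
  have hg' : ContDiffAt ℝ 1 (fun z : ZSpace n n₁ n₂ m m₁ m₂ => g z.1 z.2.2.2.1) zs :=
    ((hg.of_le (by norm_num)).comp zs hxy :)
  exact ((hgradX.add ((hH.jac_transpose_mulVec hx (by fun_prop)))).add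
      (hG.jac_transpose_mulVec hx (by fun_prop))).prodMk
    (((hH.of_le (by norm_num)).comp zs hx).prodMk (((hG.of_le (by norm_num)).comp zs hx).neg.prodMk
      (hgradY.prodMk (hh'.prodMk hg'.neg))))

end Smoothness

theorem stmt_12_general {n m n₁ n₂ m₁ m₂ : ℕ}
    (f : Vec n → Vec m → ℝ) (h : Vec n → Vec m → Vec m₁) (g : Vec n → Vec m → Vec m₂)
    (H : Vec n → Vec n₁) (G : Vec n → Vec n₂)
    (xs : Vec n) (us : Vec n₁) (vs : Vec n₂) (ys : Vec m) (μs : Vec m₁) (lams : Vec m₂)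
    (hf : ContDiffAt ℝ 2 (fun p : Vec n × Vec m => f p.1 p.2) (xs, ys))
    (hh : ContDiffAt ℝ 2 (fun p : Vec n × Vec m => h p.1 p.2) (xs, ys))
    (hg : ContDiffAt ℝ 2 (fun p : Vec n × Vec m => g p.1 p.2) (xs, ys))
    (hH : ContDiffAt ℝ 2 H xs) (hG : ContDiffAt ℝ 2 G xs)
    -- KKT conditions of the minimax problem
    (hKKTout : (us, vs) ∈ LambdaSet f h g H G xs ys μs lams)
    (hKKTin : InnerKKT f h g xs ys μs lams) :
    LocLipHomeo (Kojima f h g H G) (xs, us, vs + G xs, ys, μs, lams + g xs ys) ↔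
      StrongRegular (Hmap f h g H G) Kcone (xs, us, vs, ys, μs, lams) := by
  obtain ⟨hgradX, hHx, hv, hGx, hvG⟩ := hKKTout
  obtain ⟨hgradY, hhxy, hlam, hgxy, hlamg⟩ := hKKTin
  have hproj : projK (xs, us, vs + G xs, ys, μs, lams + g xs ys) = (xs, us, vs, ys, μs, lams) := by
    simp [projK, vecPos_add_of_mul_eq_zero hv hGx hvG, vecPos_add_of_mul_eq_zero hlam hgxy hlamg]
  have hsol : normalMap (Hmap f h g H G) (xs, us, vs + G xs, ys, μs, lams + g xs ys) = 0 := by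
    simp [normalMap, hproj, Hmap, hgradX, hHx, hgradY, hhxy]
  have hstrict := (contDiffAt_Hmap (us := us) (vs := vs) (μs := μs) (lams := lams) hf hh hg hH
    hG).hasStrictFDerivAt one_ne_zero
  rw [kojima_eq_negThird_comp_normalMap, negThird_involutive.locLipHomeo_comp_iff
    negThird_lipschitzWith, (hstrict.stronglyApproximates_normalMap hproj).locLipHomeo_iff,
    strongRegular_iff_locLipHomeo_normalMap hproj hsol]

/-- the equivalence (c) ⟺ (d) in Theorem 4.1. Let
`(x*,u*,v*,y*,μ*,λ*)` satisfy the KKT conditions of the constrained minimax problem, with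
inner strict complementarity `λ* − g(x*,y*) > 0`. Then the Kojima mapping `F` is a locally
Lipschitz homeomorphism near `(x*,u*,w*,y*,μ*,ξ*)` (with `w* = v* + G(x*)`,
`ξ* = λ* + g(x*,y*)`) if and only if `z* = (x*,u*,v*,y*,μ*,λ*)` is a strongly regular
solution of the generalized equation `0 ∈ 𝓗(z) + N_𝓚(z)`. -/
theorem stmt_12 {n m n₁ n₂ m₁ m₂ : ℕ}
    (f : Vec n → Vec m → ℝ) (h : Vec n → Vec m → Vec m₁) (g : Vec n → Vec m → Vec m₂)
    (H : Vec n → Vec n₁) (G : Vec n → Vec n₂)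
    (xs : Vec n) (us : Vec n₁) (vs : Vec n₂) (ys : Vec m) (μs : Vec m₁) (lams : Vec m₂)
    (hf : ContDiffAt ℝ 2 (fun p : Vec n × Vec m => f p.1 p.2) (xs, ys))
    (hh : ContDiffAt ℝ 2 (fun p : Vec n × Vec m => h p.1 p.2) (xs, ys))
    (hg : ContDiffAt ℝ 2 (fun p : Vec n × Vec m => g p.1 p.2) (xs, ys))
    (hH : ContDiffAt ℝ 2 H xs) (hG : ContDiffAt ℝ 2 G xs)
    -- KKT conditions of the minimax problem
    (hKKTout : (us, vs) ∈ LambdaSet f h g H G xs ys μs lams)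
    (hKKTin : InnerKKT f h g xs ys μs lams)
    -- inner strict complementarity
    (hsc : ∀ i, 0 < lams i - g xs ys i) :
    LocLipHomeo (Kojima f h g H G) (xs, us, vs + G xs, ys, μs, lams + g xs ys) ↔
      StrongRegular (Hmap f h g H G) Kcone (xs, us, vs, ys, μs, lams) :=
  stmt_12_general f h g H G xs us vs ys μs lams hf hh hg hH hG hKKTout hKKTin

end
end

section
/- Let B ∈ ℝ^{k×n}, let c_i ∈ ℝⁿ for i in a finite index set β = β₊ ∪ β₀ (disjoint) such that the rows of B together with all c_i, i ∈ β, are linearly independent. Let u ∈ ℝ^k, let v_i > 0 for i ∈ β₊, and set w = −(Bᵀu + Σ_{i∈β₊} v_i c_i). Then the affine hull of the cone C = {d ∈ ℝⁿ : Bd = 0, c_iᵀd ≤ 0 for all i ∈ β, wᵀd ≤ 0} is the subspace {d ∈ ℝⁿ : Bd = 0, c_iᵀd = 0 for all i ∈ β₊}. -/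
open Matrix

/-- If `f : ι → ℝⁿ` is a finite linearly independent family, any prescribed values of
dot products `f i ⬝ᵥ x = b i` can be achieved. -/
lemma exists_dotProduct_eq {n : ℕ} {ι : Type*} [Fintype ι] [DecidableEq ι]
    (f : ι → (Fin n → ℝ)) (hf : LinearIndependent ℝ f) (b : ι → ℝ) :
    ∃ x : Fin n → ℝ, ∀ i, f i ⬝ᵥ x = b i := by
  set A : Matrix ι (Fin n) ℝ := Matrix.of f with hA
  have hinj : Function.Injective A.vecMul := Matrix.vecMul_injective_iff.mpr hf
  have hG : IsUnit (A * Aᵀ) := by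
    rw [← Matrix.vecMul_injective_iff_isUnit]
    have : ∀ y : ι → ℝ, y ᵥ* (A * Aᵀ) = 0 → y = 0 := by
      intro y hy
      have h1 : y ᵥ* (A * Aᵀ) = (y ᵥ* A) ᵥ* Aᵀ := (Matrix.vecMul_vecMul y A Aᵀ).symm
      have h2 : (y ᵥ* A) ᵥ* Aᵀ = A *ᵥ (y ᵥ* A) := Matrix.vecMul_transpose A (y ᵥ* A)
      have h3 : y ⬝ᵥ (A *ᵥ (y ᵥ* A)) = (y ᵥ* A) ⬝ᵥ (y ᵥ* A) :=
        Matrix.dotProduct_mulVec y A (y ᵥ* A)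
      have h0 : (y ᵥ* A) ⬝ᵥ (y ᵥ* A) = 0 := by
        rw [← h3, ← h2, ← h1, hy, dotProduct_zero]
      have hz : y ᵥ* A = 0 := dotProduct_self_eq_zero.mp h0
      have : y ᵥ* A = (0 : ι → ℝ) ᵥ* A := by simp [hz]
      exact hinj this
    intro y z hyz
    have hyz' : y ᵥ* (A * Aᵀ) = z ᵥ* (A * Aᵀ) := hyz
    have h0 : (y - z) ᵥ* (A * Aᵀ) = 0 := by
      rw [Matrix.sub_vecMul, hyz', sub_self]
    exact sub_eq_zero.mp (this _ h0)
  obtain ⟨y, hy⟩ := Matrix.mulVec_surjective_iff_isUnit.mpr hG b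
  refine ⟨Aᵀ *ᵥ y, fun i => ?_⟩
  have : A *ᵥ (Aᵀ *ᵥ y) = b := by rw [Matrix.mulVec_mulVec, hy]
  have := congr_fun this i
  simpa [Matrix.mulVec, hA] using this

/-- Affine hull of the critical cone without strict complementarity:
with active indices split into strongly active ones (`Fin p`, multipliers `vᵢ > 0`) and
degenerate ones (`Fin q`), rows of `B` together with all `cᵢ` linearly independent, and
`w = −(Bᵀu + Σ_{i∈β₊} vᵢ cᵢ)`, the affine hull of
`C = {d : Bd = 0, cᵢᵀd ≤ 0 ∀i, wᵀd ≤ 0}` is `{d : Bd = 0, cᵢᵀd = 0 ∀ i ∈ β₊}`. -/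
theorem stmt_16 {n k p q : ℕ} (B : Matrix (Fin k) (Fin n) ℝ)
    (c : Fin p ⊕ Fin q → (Fin n → ℝ)) (u : Fin k → ℝ) (v : Fin p → ℝ)
    (hLI : LinearIndependent ℝ (Sum.elim (fun j => B j) c))
    (hv : ∀ i, 0 < v i) :
    (affineSpan ℝ {d : Fin n → ℝ | B *ᵥ d = 0 ∧ (∀ i, c i ⬝ᵥ d ≤ 0) ∧
        (-(Bᵀ *ᵥ u + ∑ i, v i • c (Sum.inl i))) ⬝ᵥ d ≤ 0} : Set (Fin n → ℝ)) =
      {d : Fin n → ℝ | B *ᵥ d = 0 ∧ ∀ i : Fin p, c (Sum.inl i) ⬝ᵥ d = 0} := by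
  classical
  set w : Fin n → ℝ := -(Bᵀ *ᵥ u + ∑ i, v i • c (Sum.inl i)) with hw
  set C : Set (Fin n → ℝ) :=
    {d : Fin n → ℝ | B *ᵥ d = 0 ∧ (∀ i, c i ⬝ᵥ d ≤ 0) ∧ w ⬝ᵥ d ≤ 0} with hC
  -- key dot-product computation
  have hwdot : ∀ d : Fin n → ℝ, B *ᵥ d = 0 →
      w ⬝ᵥ d = -∑ i, v i * (c (Sum.inl i) ⬝ᵥ d) := by
    intro d hd
    have h1 : (Bᵀ *ᵥ u) ⬝ᵥ d = u ⬝ᵥ (B *ᵥ d) := by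
      rw [Matrix.mulVec_transpose, ← Matrix.dotProduct_mulVec]
    have hsum : (∑ i, v i • c (Sum.inl i)) ⬝ᵥ d = ∑ i, v i * (c (Sum.inl i) ⬝ᵥ d) := by
      simp only [dotProduct, Finset.sum_apply, Pi.smul_apply, smul_eq_mul,
        Finset.mul_sum, Finset.sum_mul]
      rw [Finset.sum_comm]
      simp [mul_assoc]
    rw [hw, neg_dotProduct, add_dotProduct, h1, hd, dotProduct_zero,
      zero_add, hsum]
  -- the target submodule
  let S : Submodule ℝ (Fin n → ℝ) :=
    { carrier := {d : Fin n → ℝ | B *ᵥ d = 0 ∧ ∀ i : Fin p, c (Sum.inl i) ⬝ᵥ d = 0}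
      add_mem' := by
        rintro a b ⟨ha1, ha2⟩ ⟨hb1, hb2⟩
        refine ⟨by rw [Matrix.mulVec_add, ha1, hb1, add_zero], fun i => ?_⟩
        rw [dotProduct_add, ha2 i, hb2 i, add_zero]
      zero_mem' := by
        refine ⟨Matrix.mulVec_zero B, fun i => dotProduct_zero _⟩
      smul_mem' := by
        rintro t a ⟨ha1, ha2⟩
        refine ⟨by rw [Matrix.mulVec_smul, ha1, smul_zero], fun i => ?_⟩
        rw [dotProduct_smul, ha2 i, smul_zero] }
  -- C ⊆ S
  have hCS : C ⊆ (S : Set (Fin n → ℝ)) := by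
    rintro d ⟨hd1, hd2, hd3⟩
    refine ⟨hd1, ?_⟩
    rw [hwdot d hd1, neg_nonpos] at hd3
    have hterm : ∀ i ∈ Finset.univ, v i * (c (Sum.inl i) ⬝ᵥ d) ≤ 0 := fun i _ =>
      mul_nonpos_of_nonneg_of_nonpos (hv i).le (hd2 (Sum.inl i))
    have hsum0 : ∑ i, v i * (c (Sum.inl i) ⬝ᵥ d) = 0 :=
      le_antisymm (Finset.sum_nonpos hterm) hd3
    have := (Finset.sum_eq_zero_iff_of_nonpos hterm).mp hsum0
    intro i
    have hi := this i (Finset.mem_univ i)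
    have := mul_eq_zero.mp hi
    rcases this with h | h
    · exact absurd h (ne_of_gt (hv i))
    · exact h
  apply Set.Subset.antisymm
  · -- affineSpan C ⊆ S
    have h1 : affineSpan ℝ C ≤ S.toAffineSubspace := affineSpan_le.mpr hCS
    intro x hx
    exact Submodule.mem_toAffineSubspace.mp (h1 hx)
  · -- S ⊆ affineSpan C
    intro d hd
    obtain ⟨hd1, hd2⟩ := hd
    -- pick x0 with B x0 = 0, c(inl)·x0 = 0, c(inr)·x0 = -1
    obtain ⟨x0, hx0⟩ := exists_dotProduct_eq (Sum.elim (fun j => B j) c) hLI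
      (Sum.elim 0 (Sum.elim 0 (fun _ => -1)))
    have hBx0 : B *ᵥ x0 = 0 := by
      ext j
      exact hx0 (Sum.inl j)
    have hcl : ∀ i : Fin p, c (Sum.inl i) ⬝ᵥ x0 = 0 := fun i => hx0 (Sum.inr (Sum.inl i))
    have hcr : ∀ j : Fin q, c (Sum.inr j) ⬝ᵥ x0 = -1 := fun j => hx0 (Sum.inr (Sum.inr j))
    set t : ℝ := ∑ j : Fin q, max (c (Sum.inr j) ⬝ᵥ d) 0 with ht
    have ht0 : 0 ≤ t := Finset.sum_nonneg fun j _ => le_max_right _ _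
    have htj : ∀ j : Fin q, c (Sum.inr j) ⬝ᵥ d ≤ t := fun j =>
      le_trans (le_max_left _ _)
        (Finset.single_le_sum (fun i _ => le_max_right (c (Sum.inr i) ⬝ᵥ d) 0)
          (Finset.mem_univ j))
    -- P1 = d + t • x0 ∈ C
    have hP1 : d + t • x0 ∈ C := by
      have hB1 : B *ᵥ (d + t • x0) = 0 := by
        rw [Matrix.mulVec_add, hd1, Matrix.mulVec_smul, hBx0, smul_zero, add_zero]
      refine ⟨hB1, ?_, ?_⟩
      · intro i
        rcases i with i | j
        · rw [dotProduct_add, hd2 i, dotProduct_smul, hcl i, smul_zero, add_zero]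
        · rw [dotProduct_add, dotProduct_smul, hcr j, smul_eq_mul, mul_neg_one]
          linarith [htj j]
      · rw [hwdot _ hB1, neg_nonpos]
        apply Finset.sum_nonneg
        intro i _
        rw [dotProduct_add, hd2 i, dotProduct_smul, hcl i, smul_zero, add_zero,
          mul_zero]
    -- P2 = t • x0 ∈ C
    have hP2 : t • x0 ∈ C := by
      have hB2 : B *ᵥ (t • x0) = 0 := by rw [Matrix.mulVec_smul, hBx0, smul_zero]
      refine ⟨hB2, ?_, ?_⟩
      · intro i
        rcases i with i | j
        · rw [dotProduct_smul, hcl i, smul_zero]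
        · rw [dotProduct_smul, hcr j, smul_eq_mul, mul_neg_one]
          linarith
      · rw [hwdot _ hB2, neg_nonpos]
        apply Finset.sum_nonneg
        intro i _
        rw [dotProduct_smul, hcl i, smul_zero, mul_zero]
    -- 0 ∈ C
    have hP3 : (0 : Fin n → ℝ) ∈ C := by
      refine ⟨Matrix.mulVec_zero B, fun i => le_of_eq (dotProduct_zero _),
        le_of_eq (dotProduct_zero _)⟩
    have key : (1 : ℝ) • ((d + t • x0) -ᵥ (t • x0)) +ᵥ (0 : Fin n → ℝ) ∈ affineSpan ℝ C :=
      AffineSubspace.smul_vsub_vadd_mem _ 1 (subset_affineSpan ℝ C hP1)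
        (subset_affineSpan ℝ C hP2) (subset_affineSpan ℝ C hP3)
    have : (1 : ℝ) • ((d + t • x0) -ᵥ (t • x0)) +ᵥ (0 : Fin n → ℝ) = d := by
      simp [vsub_eq_sub, vadd_eq_add]
    rwa [this] at key
end
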